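/- In the same two-market single-producer game with demands p_1(z)=1−z, p_2(z)=2−2z, cost (x_{11}+x_{12})^2, Walrasian welfare, and link capacity 0 < χ < 1/3, there is a unique Nash equilibrium with x* = ((1+5χ)/10, (3−5χ)/10) and y* = (χ, 0); at this equilibrium the link from market 1 to market 2 is saturated, and the prices satisfy p_1(z*_1) = 9/10 + χ/2 < 7/5 − χ = p_2(z*_2), so a strict price difference persists. -/
import Mathlib


noncomputable section

/-- Net consumption in market 1: `z₁ = x₁₁ - (y₁ - y₂)`. -/
def zz1 (x11 x12 y1 y2 : ℝ) : ℝ := x11 - (y1 - y2)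

/-- Net consumption in market 2: `z₂ = x₁₂ + (y₁ - y₂)`. -/
def zz2 (x11 x12 y1 y2 : ℝ) : ℝ := x12 + (y1 - y2)

/-- Producer's utility with demands `p₁(z)=1-z`, `p₂(z)=2-2z` and cost `(x₁₁+x₁₂)²`. -/
def uP (x11 x12 y1 y2 : ℝ) : ℝ :=
  x11 * (1 - zz1 x11 x12 y1 y2) + x12 * (2 - 2 * zz2 x11 x12 y1 y2) - (x11 + x12) ^ 2

/-- Market maker's (Walrasian welfare) utility. -/
def uM (x11 x12 y1 y2 : ℝ) : ℝ :=
  zz1 x11 x12 y1 y2 + 2 * zz2 x11 x12 y1 y2 - (zz1 x11 x12 y1 y2) ^ 2 / 2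
    - (zz2 x11 x12 y1 y2) ^ 2 - (x11 + x12) ^ 2

/-- Nash equilibrium of the two-market game with link capacity `χ` in both directions. -/
def Nash2 (χ x11 x12 y1 y2 : ℝ) : Prop :=
  0 ≤ x11 ∧ 0 ≤ x12 ∧ y1 ∈ Set.Icc 0 χ ∧ y2 ∈ Set.Icc 0 χ ∧
  (∀ a b : ℝ, 0 ≤ a → 0 ≤ b → uP a b y1 y2 ≤ uP x11 x12 y1 y2) ∧
  (∀ w1 w2 : ℝ, w1 ∈ Set.Icc 0 χ → w2 ∈ Set.Icc 0 χ →
    uM x11 x12 w1 w2 ≤ uM x11 x12 y1 y2)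

/- Auxiliary KKT-extraction lemmas for the producer's problem.  Here
`g1 = ∂uP/∂x11 = 1 + (y1-y2) - 4x11 - 2x12` and
`g2 = ∂uP/∂x12 = 2 - 2(y1-y2) - 2x11 - 6x12`. -/

lemma g1_le (x11 x12 y1 y2 : ℝ) (hx12 : 0 ≤ x12)
    (hP : ∀ a b : ℝ, 0 ≤ a → 0 ≤ b → uP a b y1 y2 ≤ uP x11 x12 y1 y2)
    (hx11 : 0 ≤ x11) :
    1 + (y1 - y2) - 4 * x11 - 2 * x12 ≤ 0 := by
  by_contra h
  push_neg at h
  have := hP (x11 + (1 + (y1 - y2) - 4 * x11 - 2 * x12) / 4) x12 (by linarith) hx12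
  simp only [uP, zz1, zz2] at this
  nlinarith [sq_nonneg (1 + (y1 - y2) - 4 * x11 - 2 * x12)]

lemma g1_ge (x11 x12 y1 y2 : ℝ) (hx12 : 0 ≤ x12)
    (hP : ∀ a b : ℝ, 0 ≤ a → 0 ≤ b → uP a b y1 y2 ≤ uP x11 x12 y1 y2)
    (hx11 : 0 < x11) :
    0 ≤ 1 + (y1 - y2) - 4 * x11 - 2 * x12 := by
  by_contra h
  push_neg at h
  set g := 1 + (y1 - y2) - 4 * x11 - 2 * x12 with hg
  set s := min x11 (-g / 4) with hs
  have hs0 : 0 < s := lt_min hx11 (by linarith)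
  have hsx : s ≤ x11 := min_le_left _ _
  have hsg : s ≤ -g / 4 := min_le_right _ _
  have := hP (x11 - s) x12 (by linarith) hx12
  simp only [uP, zz1, zz2] at this
  nlinarith [mul_pos hs0 hs0, mul_le_mul_of_nonneg_left hsg hs0.le]

lemma g2_le (x11 x12 y1 y2 : ℝ) (hx11 : 0 ≤ x11)
    (hP : ∀ a b : ℝ, 0 ≤ a → 0 ≤ b → uP a b y1 y2 ≤ uP x11 x12 y1 y2)
    (hx12 : 0 ≤ x12) :
    2 - 2 * (y1 - y2) - 2 * x11 - 6 * x12 ≤ 0 := by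
  by_contra h
  push_neg at h
  have := hP x11 (x12 + (2 - 2 * (y1 - y2) - 2 * x11 - 6 * x12) / 6) hx11 (by linarith)
  simp only [uP, zz1, zz2] at this
  nlinarith [sq_nonneg (2 - 2 * (y1 - y2) - 2 * x11 - 6 * x12)]

lemma g2_ge (x11 x12 y1 y2 : ℝ) (hx11 : 0 ≤ x11)
    (hP : ∀ a b : ℝ, 0 ≤ a → 0 ≤ b → uP a b y1 y2 ≤ uP x11 x12 y1 y2)
    (hx12 : 0 < x12) :
    0 ≤ 2 - 2 * (y1 - y2) - 2 * x11 - 6 * x12 := by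
  by_contra h
  push_neg at h
  set g := 2 - 2 * (y1 - y2) - 2 * x11 - 6 * x12 with hg
  set s := min x12 (-g / 6) with hs
  have hs0 : 0 < s := lt_min hx12 (by linarith)
  have hsx : s ≤ x12 := min_le_left _ _
  have hsg : s ≤ -g / 6 := min_le_right _ _
  have := hP x11 (x12 - s) hx11 (by linarith)
  simp only [uP, zz1, zz2] at this
  nlinarith [mul_pos hs0 hs0, mul_le_mul_of_nonneg_left hsg hs0.le]

/-- If the market maker's marginal value of extra net flow `1 + x11 - 2x12 - 3(y1-y2)`
is positive at an optimum, then the flow is saturated: `y1 = χ`, `y2 = 0`. -/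
lemma mm_corner (χ x11 x12 y1 y2 : ℝ)
    (hy1 : y1 ∈ Set.Icc 0 χ) (hy2 : y2 ∈ Set.Icc 0 χ)
    (hM : ∀ w1 w2 : ℝ, w1 ∈ Set.Icc 0 χ → w2 ∈ Set.Icc 0 χ →
      uM x11 x12 w1 w2 ≤ uM x11 x12 y1 y2)
    (hgM : 0 < 1 + x11 - 2 * x12 - 3 * (y1 - y2)) :
    y1 = χ ∧ y2 = 0 := by
  obtain ⟨hy10, hy1χ⟩ := hy1
  obtain ⟨hy20, hy2χ⟩ := hy2
  set g := 1 + x11 - 2 * x12 - 3 * (y1 - y2) with hg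
  have hd : y1 - y2 = χ := by
    by_contra hd
    have hdlt : y1 - y2 < χ := lt_of_le_of_ne (by linarith) hd
    rcases lt_or_ge y1 χ with h1 | h1
    · set t := min (χ - y1) (g / 3) with ht
      have ht0 : 0 < t := lt_min (by linarith) (by linarith)
      have ht1 : t ≤ χ - y1 := min_le_left _ _
      have ht2 : t ≤ g / 3 := min_le_right _ _
      have := hM (y1 + t) y2 ⟨by linarith, by linarith⟩ ⟨hy20, hy2χ⟩
      simp only [uM, zz1, zz2] at this
      nlinarith [mul_pos ht0 ht0, mul_le_mul_of_nonneg_left ht2 ht0.le]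
    · have hy2pos : 0 < y2 := by linarith
      set t := min y2 (g / 3) with ht
      have ht0 : 0 < t := lt_min hy2pos (by linarith)
      have ht1 : t ≤ y2 := min_le_left _ _
      have ht2 : t ≤ g / 3 := min_le_right _ _
      have := hM y1 (y2 - t) ⟨hy10, hy1χ⟩ ⟨by linarith, by linarith⟩
      simp only [uM, zz1, zz2] at this
      nlinarith [mul_pos ht0 ht0, mul_le_mul_of_nonneg_left ht2 ht0.le]
  constructor <;> linarith

/-- for capacity `0 < χ < 1/3`, the unique Nash equilibrium is
`x* = ((1+5χ)/10, (3-5χ)/10)`, `y* = (χ, 0)`; the link from market 1 to market 2 is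
saturated and a strict price difference `9/10 + χ/2 < 7/5 - χ` persists. -/
theorem two_market_low_capacity_equilibrium
    (χ : ℝ) (hχ : 0 < χ) (hχ' : χ < 1 / 3) :
    Nash2 χ ((1 + 5 * χ) / 10) ((3 - 5 * χ) / 10) χ 0 ∧
    (∀ x11 x12 y1 y2 : ℝ, Nash2 χ x11 x12 y1 y2 →
      x11 = (1 + 5 * χ) / 10 ∧ x12 = (3 - 5 * χ) / 10 ∧ y1 = χ ∧ y2 = 0) ∧
    1 - zz1 ((1 + 5 * χ) / 10) ((3 - 5 * χ) / 10) χ 0 = 9 / 10 + χ / 2 ∧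
    2 - 2 * zz2 ((1 + 5 * χ) / 10) ((3 - 5 * χ) / 10) χ 0 = 7 / 5 - χ ∧
    9 / 10 + χ / 2 < 7 / 5 - χ := by
  refine ⟨⟨by linarith, by linarith, ⟨hχ.le, le_refl χ⟩, ⟨le_refl 0, hχ.le⟩, ?_, ?_⟩,
    ?_, ?_, ?_, ?_⟩
  · -- producer optimality at the claimed point
    intro a b ha hb
    simp only [uP, zz1, zz2]
    nlinarith [sq_nonneg (a - (1 + 5 * χ) / 10), sq_nonneg (b - (3 - 5 * χ) / 10),
      sq_nonneg (a - (1 + 5 * χ) / 10 + (b - (3 - 5 * χ) / 10))]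
  · -- market maker optimality at the claimed point
    intro w1 w2 ⟨hw10, hw1χ⟩ ⟨hw20, hw2χ⟩
    simp only [uM, zz1, zz2]
    nlinarith [sq_nonneg (w1 - w2 - χ),
      mul_nonneg (by linarith : (0:ℝ) ≤ χ - w1 + w2) (by linarith : (0:ℝ) ≤ 1 - 3 * χ)]
  · -- uniqueness
    rintro x11 x12 y1 y2 ⟨hx11, hx12, hy1, hy2, hP, hM⟩
    have hdχ : y1 - y2 ≤ χ := by
      have := hy1.2; have := hy2.1; linarith
    have hdχ' : -χ ≤ y1 - y2 := by
      have := hy1.1; have := hy2.2; linarith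
    have h1 := g1_le x11 x12 y1 y2 hx12 hP hx11
    have h2 := g2_le x11 x12 y1 y2 hx11 hP hx12
    -- the market maker's marginal value of extra flow is positive at any equilibrium
    have hgM : 0 < 1 + x11 - 2 * x12 - 3 * (y1 - y2) := by
      rcases hx11.lt_or_eq with h11 | h11
      · rcases hx12.lt_or_eq with h12 | h12
        · have e1 := g1_ge x11 x12 y1 y2 hx12 hP h11
          have e2 := g2_ge x11 x12 y1 y2 hx11 hP h12
          linarith
        · -- x12 = 0: impossible for d ≤ χ < 1/3
          have e1 := g1_ge x11 x12 y1 y2 hx12 hP h11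
          linarith
      · rcases hx12.lt_or_eq with h12 | h12
        · have e2 := g2_ge x11 x12 y1 y2 hx11 hP h12
          linarith
        · linarith
    obtain ⟨hy1e, hy2e⟩ := mm_corner χ x11 x12 y1 y2 hy1 hy2 hM hgM
    -- now pin down the producer's choice: both coordinates are interior
    have hx11pos : 0 < x11 := by
      rcases hx11.lt_or_eq with h11 | h11
      · exact h11
      · exfalso
        rcases hx12.lt_or_eq with h12 | h12
        · have e2 := g2_ge x11 x12 y1 y2 hx11 hP h12
          linarith
        · linarith
    have hx12pos : 0 < x12 := by
      rcases hx12.lt_or_eq with h12 | h12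
      · exact h12
      · exfalso
        have e1 := g1_ge x11 x12 y1 y2 hx12 hP hx11pos
        linarith
    have e1 := g1_ge x11 x12 y1 y2 hx12 hP hx11pos
    have e2 := g2_ge x11 x12 y1 y2 hx11 hP hx12pos
    exact ⟨by linarith, by linarith, hy1e, hy2e⟩
  · simp only [zz1]; ring
  · simp only [zz2]; ring
  · linarith
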